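/- arXiv:math/0509367 — 3 statements merged into one kernel-verified Lean document; each statement's English description precedes it below -/
import Mathlib

section
/- In the Cox-Ross-Rubinstein game, the strategy M_n = (η̄(n, uS_{n-1}) - η̄(n, dS_{n-1}))/((u-d)S_{n-1}) with initial capital η̄(0, S_0) replicates the discounted payoff: for every path (x_1,...,x_N) ∈ {u,d}^N with S_n = S_{n-1}x_n and capital update K_n = rK_{n-1} + M_n(S_n - rS_{n-1}), K_0 = η̄(0, S_0), one has K_N = η(S_N). -/
theorem stmt_5 (N : ℕ) (u r d S0 : ℝ) (hud : u > r) (hrd : r > d) (hd : d > 0)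
    (hS0 : S0 > 0) (η : ℝ → ℝ) (p : ℝ) (hp : p = (r - d) / (u - d))
    (ηbar : ℕ → ℝ → ℝ)
    (hterm : ∀ s : ℝ, ηbar N s = η s)
    (hrec : ∀ n < N, ∀ s : ℝ,
      ηbar n s = (1 / r) * (p * ηbar (n + 1) (u * s) + (1 - p) * ηbar (n + 1) (d * s)))
    (x : ℕ → ℝ) (hx : ∀ n < N, x (n + 1) = u ∨ x (n + 1) = d)
    (S : ℕ → ℝ) (hS0' : S 0 = S0) (hSrec : ∀ n, S (n + 1) = S n * x (n + 1))
    (M : ℕ → ℝ)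
    (hM : ∀ n < N, M (n + 1) =
      (ηbar (n + 1) (u * S n) - ηbar (n + 1) (d * S n)) / ((u - d) * S n))
    (K : ℕ → ℝ) (hK0 : K 0 = ηbar 0 S0)
    (hKrec : ∀ n, K (n + 1) = r * K n + M (n + 1) * (S (n + 1) - r * S n)) :
    K N = η (S N) := by
  have hr : (0:ℝ) < r := hd.trans hrd
  have hu : (0:ℝ) < u := hr.trans hud
  have hud' : (0:ℝ) < u - d := by linarith
  have hSpos : ∀ n ≤ N, 0 < S n := by
    intro n hn
    induction n with
    | zero => rw [hS0']; exact hS0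
    | succ k ih =>
      have ihk := ih (by omega)
      rw [hSrec]
      rcases hx k (by omega) with h | h <;> rw [h]
      · exact mul_pos ihk hu
      · exact mul_pos ihk hd
  have key : ∀ n ≤ N, K n = ηbar n (S n) := by
    intro n hn
    induction n with
    | zero => rw [hK0, hS0']
    | succ k ih =>
      have hkN : k < N := hn
      have ihk := ih (le_of_lt hkN)
      have hSk : S k ≠ 0 := ne_of_gt (hSpos k (le_of_lt hkN))
      have hr' : r ≠ 0 := ne_of_gt hr
      have hud'' : u - d ≠ 0 := ne_of_gt hud'
      rw [hKrec, hSrec, hM k hkN, ihk, hrec k hkN]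
      rcases hx k hkN with h | h <;> rw [h, hp, mul_comm (S k)] <;>
        field_simp <;> ring
  rw [key N le_rfl, hterm]
end

section
/- For the sampling-without-replacement game with ν₁ + ν₂ ≥ N, the backward-induction price satisfies η̄(0,0) = Σ_{m=max(0,N-ν₂)}^{min(ν₁,N)} η(m) · C(ν₁, m)·C(ν₂, N-m)/C(ν₁+ν₂, N), i.e., the game price of a European payoff η(S_N) is the hypergeometric expectation of η. -/
/-!
After `s` successes and `t` failures have been drawn, `ν₁ - s` marked and `ν₂ - t` unmarked
items remain, and the backward-induction value `η̄(s + t, s)` is the hypergeometric mean of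
`η (s + ·)` over the remaining `N - s - t` draws. This is proved by induction on the number of
remaining draws: the hypergeometric law decomposes along the first draw exactly as the recursion
for `η̄` does, which comes down to `n * C(n - 1, k) = (k + 1) * C(n, k + 1)`.
-/

open Finset

theorem Nat.mul_choose_sub_one (n k : ℕ) : n * (n - 1).choose k = (k + 1) * n.choose (k + 1) := by
  cases n with
  | zero => simp
  | succ n => simpa [mul_comm] using Nat.add_one_mul_choose_eq n k

theorem sum_mul_choose_mul_choose_succ (a b K : ℕ) (f : ℕ → ℝ) :
    (a : ℝ) * ∑ m ∈ range (K + 1), f (m + 1) * ((a - 1).choose m * b.choose (K - m))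
      + b * ∑ m ∈ range (K + 1), f m * (a.choose m * (b - 1).choose (K - m))
      = (K + 1) * ∑ m ∈ range (K + 2), f m * (a.choose m * b.choose (K + 1 - m)) := by
  set g : ℕ → ℝ := fun m ↦ f m * (a.choose m * b.choose (K + 1 - m))
  have first :
      (a : ℝ) * ∑ m ∈ range (K + 1), f (m + 1) * ((a - 1).choose m * b.choose (K - m))
        = ∑ m ∈ range (K + 2), m * g m := by
    rw [sum_range_succ' (fun m ↦ m * g m), Nat.cast_zero, zero_mul, add_zero, mul_sum]
    refine sum_congr rfl fun m _ ↦ ?_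
    have h : (a : ℝ) * (a - 1).choose m = (m + 1) * a.choose (m + 1) := by
      exact_mod_cast Nat.mul_choose_sub_one a m
    simp only [g, Nat.add_sub_add_right, Nat.cast_add_one]
    linear_combination (f (m + 1) * b.choose (K - m)) * h
  have second : (b : ℝ) * ∑ m ∈ range (K + 1), f m * (a.choose m * (b - 1).choose (K - m))
      = ∑ m ∈ range (K + 2), (K + 1 - m) * g m := by
    rw [sum_range_succ (fun m ↦ (K + 1 - m) * g m), Nat.cast_add_one, sub_self, zero_mul,
      add_zero, mul_sum]
    refine sum_congr rfl fun m hm ↦ ?_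
    have hm : m ≤ K := Nat.lt_succ_iff.mp (mem_range.mp hm)
    have h : (b : ℝ) * (b - 1).choose (K - m) = (K + 1 - m) * b.choose (K + 1 - m) := by
      have := Nat.mul_choose_sub_one b (K - m)
      rw [← Nat.sub_add_comm hm] at this
      rw [show ((K : ℝ) + 1 - m) = ((K - m + 1 : ℕ) : ℝ) by push_cast [hm]; ring,
        ← Nat.sub_add_comm hm]
      exact_mod_cast this
    simp only [g]
    linear_combination (f m * a.choose m) * h
  rw [first, second, mul_sum, ← sum_add_distrib]
  exact sum_congr rfl fun m _ ↦ by ring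

theorem natCast_div_mul_eq_of_pos (c : ℕ) (d : ℝ) {x y : ℝ} (h : 0 < c → x = y) :
    c / d * x = c / d * y := by
  rcases c.eq_zero_or_pos with hc | hc
  · simp [hc]
  · rw [h hc]

noncomputable def hypergeomMean (a b K : ℕ) (f : ℕ → ℝ) : ℝ :=
  ∑ m ∈ range (K + 1),
    f m * ((a.choose m : ℝ) * (b.choose (K - m) : ℝ) / ((a + b).choose K : ℝ))

theorem hypergeomMean_zero (a b : ℕ) (f : ℕ → ℝ) : hypergeomMean a b 0 f = f 0 := by
  simp [hypergeomMean]

theorem hypergeomMean_eq_sum_div (a b K : ℕ) (f : ℕ → ℝ) :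
    hypergeomMean a b K f
      = (∑ m ∈ range (K + 1), f m * (a.choose m * b.choose (K - m))) / (a + b).choose K := by
  rw [hypergeomMean, sum_div]
  exact sum_congr rfl fun m _ ↦ (mul_div_assoc ..).symm

theorem hypergeomMean_succ (a b K : ℕ) (f : ℕ → ℝ) :
    hypergeomMean a b (K + 1) f
      = a / (a + b) * hypergeomMean (a - 1) b K (fun m ↦ f (m + 1))
        + b / (a + b) * hypergeomMean a (b - 1) K f := by
  set S₁ := ∑ m ∈ range (K + 1), f (m + 1) * ((a - 1).choose m * b.choose (K - m) : ℝ)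
  set S₂ := ∑ m ∈ range (K + 1), f m * (a.choose m * (b - 1).choose (K - m) : ℝ)
  have hdenom :
      ((a + b : ℕ) : ℝ) * (a + b - 1).choose K = (K + 1) * (a + b).choose (K + 1) := by
    exact_mod_cast Nat.mul_choose_sub_one (a + b) K
  set C := ((a + b - 1).choose K : ℝ)
  calc hypergeomMean a b (K + 1) f
      = ((K + 1) * ∑ m ∈ range (K + 2), f m * (a.choose m * b.choose (K + 1 - m)))
          / ((K + 1) * (a + b).choose (K + 1)) := by
        rw [hypergeomMean_eq_sum_div, mul_div_mul_left _ _ (by positivity)]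
    _ = (a * S₁ + b * S₂) / ((a + b : ℕ) * C) := by
        rw [sum_mul_choose_mul_choose_succ, hdenom]
    _ = a / (a + b) * (S₁ / C) + b / (a + b) * (S₂ / C) := by
        rw [add_div, mul_div_mul_comm, mul_div_mul_comm, Nat.cast_add]
    _ = _ := by
        rw [hypergeomMean_eq_sum_div, hypergeomMean_eq_sum_div]
        congr 1
        · exact natCast_div_mul_eq_of_pos a _ fun ha ↦ by rw [← Nat.sub_add_comm ha]
        · exact natCast_div_mul_eq_of_pos b _ fun hb ↦ by rw [← Nat.add_sub_assoc hb]

theorem hypergeomMean_eq_sum_Icc (a b K : ℕ) (f : ℕ → ℝ) :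
    hypergeomMean a b K f = ∑ m ∈ Icc (K - b) (min a K),
      f m * ((a.choose m : ℝ) * (b.choose (K - m) : ℝ) / ((a + b).choose K : ℝ)) := by
  refine (sum_subset (fun m hm ↦ ?_) fun m hm hm' ↦ ?_).symm
  · simp only [mem_Icc, mem_range] at hm ⊢
    omega
  · simp only [mem_Icc, mem_range, not_and_or, not_le] at hm hm'
    rcases hm' with h | h
    · simp [Nat.choose_eq_zero_of_lt (by omega : b < K - m)]
    · simp [Nat.choose_eq_zero_of_lt (by omega : a < m)]

theorem price_eq_hypergeomMean (ν₁ ν₂ N : ℕ) (hsum : ν₁ + ν₂ ≥ N) (η : ℤ → ℝ)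
    (ηbar : ℕ → ℤ → ℝ)
    (hterm : ∀ s : ℤ, ηbar N s = η s)
    (hrec : ∀ n < N, ∀ s : ℤ, 0 ≤ s → s ≤ n →
      ηbar n s =
        (max 0 ((ν₁ : ℝ) - s) / ((ν₁ : ℝ) + ν₂ - n)) * ηbar (n + 1) (s + 1) +
        (1 - max 0 ((ν₁ : ℝ) - s) / ((ν₁ : ℝ) + ν₂ - n)) * ηbar (n + 1) s)
    (K s t : ℕ) (hK : s + t + K = N) (hs : s ≤ ν₁) (ht : t ≤ ν₂) :
    ηbar (s + t) s = hypergeomMean (ν₁ - s) (ν₂ - t) K (fun m ↦ η ↑(s + m)) := by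
  induction K generalizing s t with
  | zero => rw [hypergeomMean_zero, add_zero, ← add_zero (s + t), hK, hterm]
  | succ K ih =>
    have hpos : 0 < ν₁ - s + (ν₂ - t) := by omega
    have hp : max 0 ((ν₁ : ℝ) - ((s : ℤ) : ℝ)) / (ν₁ + ν₂ - ((s + t : ℕ) : ℝ))
        = (ν₁ - s : ℕ) / ((ν₁ - s : ℕ) + (ν₂ - t : ℕ)) := by
      rw [Int.cast_natCast, max_eq_right (sub_nonneg.mpr (by exact_mod_cast hs))]
      push_cast [hs, ht]
      ring_nf
    have hq : 1 - ((ν₁ - s : ℕ) : ℝ) / ((ν₁ - s : ℕ) + (ν₂ - t : ℕ))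
        = (ν₂ - t : ℕ) / ((ν₁ - s : ℕ) + (ν₂ - t : ℕ)) := by
      rw [one_sub_div (by exact_mod_cast hpos.ne'), add_sub_cancel_left]
    rw [hrec (s + t) (by omega) s (Nat.cast_nonneg s) (by exact_mod_cast Nat.le_add_right s t),
      hp, hq, hypergeomMean_succ]
    congr 1
    · refine natCast_div_mul_eq_of_pos _ _ fun h ↦ ?_
      rw [← Nat.cast_succ, Nat.add_right_comm, ih (s + 1) t (by omega) (by omega) ht,
        Nat.sub_sub]
      simp only [Nat.add_right_comm s 1, Nat.add_assoc]
    · exact natCast_div_mul_eq_of_pos _ _ fun h ↦ by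
        rw [Nat.add_assoc, ih s (t + 1) (by omega) hs (by omega), Nat.sub_sub]

theorem stmt_7_general (ν₁ ν₂ N : ℕ)
    (hsum : ν₁ + ν₂ ≥ N) (η : ℤ → ℝ)
    (ηbar : ℕ → ℤ → ℝ)
    (hterm : ∀ s : ℤ, ηbar N s = η s)
    (hrec : ∀ n < N, ∀ s : ℤ, 0 ≤ s → s ≤ n →
      ηbar n s =
        (max 0 ((ν₁ : ℝ) - s) / ((ν₁ : ℝ) + ν₂ - n)) * ηbar (n + 1) (s + 1) +
        (1 - max 0 ((ν₁ : ℝ) - s) / ((ν₁ : ℝ) + ν₂ - n)) * ηbar (n + 1) s) :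
    ηbar 0 0 = ∑ m ∈ Finset.Icc (N - ν₂) (min ν₁ N),
      η m * ((ν₁.choose m : ℝ) * (ν₂.choose (N - m) : ℝ) / ((ν₁ + ν₂).choose N : ℝ)) := by
  rw [← hypergeomMean_eq_sum_Icc]
  simpa using price_eq_hypergeomMean ν₁ ν₂ N hsum η ηbar hterm hrec N 0 0 (by simp)
    ν₁.zero_le ν₂.zero_le

theorem stmt_7 (ν₁ ν₂ N : ℕ) (hν₁ : 0 < ν₁) (hν₂ : 0 < ν₂) (hN : 0 < N)
    (hsum : ν₁ + ν₂ ≥ N) (η : ℤ → ℝ)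
    (ηbar : ℕ → ℤ → ℝ)
    (hterm : ∀ s : ℤ, ηbar N s = η s)
    (hrec : ∀ n < N, ∀ s : ℤ, 0 ≤ s → s ≤ n →
      ηbar n s =
        (max 0 ((ν₁ : ℝ) - s) / ((ν₁ : ℝ) + ν₂ - n)) * ηbar (n + 1) (s + 1) +
        (1 - max 0 ((ν₁ : ℝ) - s) / ((ν₁ : ℝ) + ν₂ - n)) * ηbar (n + 1) s) :
    ηbar 0 0 = ∑ m ∈ Finset.Icc (N - ν₂) (min ν₁ N),
      η m * ((ν₁.choose m : ℝ) * (ν₂.choose (N - m) : ℝ) / ((ν₁ + ν₂).choose N : ℝ)) :=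
  stmt_7_general ν₁ ν₂ N hsum η ηbar hterm hrec
end

section
/- The fully-expanded sum over binary paths of the hypergeometric path weights times η(S_N) equals the hypergeometric expectation: Σ_{(x_1,...,x_N) ∈ {0,1}^N} ∏_{n=1}^N p_n(S_{n-1})^{x_n}(1-p_n(S_{n-1}))^{1-x_n} η(S_N) = Σ_{m} η(m)·C(ν₁,m)C(ν₂,N-m)/C(ν₁+ν₂,N), where the path weight depends only on S_N and the number of paths with S_N = m is C(N,m). -/
/-!
Drawing without replacement from an urn with `a` balls of the first kind and `b` of the second,
the product of the draw probabilities along a path with `k` first-kind balls among the first `n`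
draws telescopes to `a^(k) b^(n-k) / (a+b)^(n)` (falling factorials): each draw multiplies this
weight by exactly the probability of the next draw. So the weight of a path depends only on its
number of successes, there are `C(N, m)` paths with `m` successes, and
`C(N, m) m! (N-m)! = N!` turns the falling factorials into binomial coefficients.
-/

open Finset
open scoped Nat

theorem sum_fun_fin_two_apply_sum {M : Type*} [AddCommMonoid M] (N : ℕ) (f : ℕ → M) :
    ∑ x : Fin N → Fin 2, f (∑ i, (x i : ℕ)) = ∑ m ∈ range (N + 1), N.choose m • f m := by
  let indicator (s : Finset (Fin N)) : Fin N → Fin 2 := fun i => if i ∈ s then 1 else 0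
  have h_bij : Function.Bijective indicator := by
    refine ⟨fun s t hst => ?_, fun x => ⟨univ.filter (x · = 1), funext fun i => ?_⟩⟩
    · ext i
      have := congr_fun hst i
      by_cases hs : i ∈ s <;> by_cases ht : i ∈ t <;> simp_all [indicator]
    · have : x i = 0 ∨ x i = 1 := by omega
      rcases this with h | h <;> simp [indicator, h]
  have h_card (s : Finset (Fin N)) : ∑ i, (indicator s i : ℕ) = #s := by
    simp [indicator, apply_ite]
  rw [← Fintype.sum_bijective indicator h_bij (fun s => f #s) _ fun s => by rw [h_card],
    ← powerset_univ, sum_powerset_apply_card, card_univ, Fintype.card_fin]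

namespace Hypergeometric

variable (a b : ℕ)

-- The paper's `p_{i+1}(s)`: draws are indexed from `0`, and the truncated subtraction `a - s`
-- is its `max(0, ν₁ - s)`.
noncomputable def drawProb (s i : ℕ) : ℝ := ((a - s : ℕ) : ℝ) / ((a + b - i : ℕ) : ℝ)

noncomputable def drawWeight (s i x : ℕ) : ℝ :=
  drawProb a b s i ^ x * (1 - drawProb a b s i) ^ (1 - x)

noncomputable def pathWeight (n k : ℕ) : ℝ :=
  (a.descFactorial k : ℝ) * (b.descFactorial (n - k) : ℝ) / ((a + b).descFactorial n : ℝ)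

theorem drawProb_eq {s i : ℕ} (hi : i ≤ a + b) :
    drawProb a b s i = max 0 ((a : ℝ) - s) / ((a : ℝ) + b - i) := by
  have h_num : ((a - s : ℕ) : ℝ) = max 0 ((a : ℝ) - s) := by
    rcases le_total s a with h | h
    · rw [Nat.cast_sub h, max_eq_right (sub_nonneg.mpr (by exact_mod_cast h))]
    · rw [Nat.sub_eq_zero_of_le h, Nat.cast_zero,
        max_eq_left (sub_nonpos.mpr (by exact_mod_cast h))]
  rw [drawProb, h_num, Nat.cast_sub hi, Nat.cast_add]

theorem drawProb_mul_pathWeight (s i : ℕ) :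
    drawProb a b s i * pathWeight a b i s = pathWeight a b (i + 1) (s + 1) := by
  rw [drawProb, pathWeight, pathWeight, Nat.descFactorial_succ, Nat.descFactorial_succ,
    Nat.add_sub_add_right, div_mul_div_comm]
  push_cast
  ring

theorem one_sub_drawProb_mul_pathWeight {s i : ℕ} (hs : s ≤ i) (hi : i < a + b) :
    (1 - drawProb a b s i) * pathWeight a b i s = pathWeight a b (i + 1) s := by
  rw [pathWeight, pathWeight, Nat.succ_sub hs, Nat.descFactorial_succ, Nat.descFactorial_succ]
  rcases lt_or_ge a s with ha | ha
  · simp [Nat.descFactorial_eq_zero_iff_lt.mpr ha]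
  rcases lt_or_ge b (i - s) with hb | hb
  · simp [Nat.descFactorial_eq_zero_iff_lt.mpr hb]
  have h_compl : 1 - drawProb a b s i = ((b - (i - s) : ℕ) : ℝ) / ((a + b - i : ℕ) : ℝ) := by
    have hden : ((a + b - i : ℕ) : ℝ) ≠ 0 := by exact_mod_cast (Nat.sub_pos_of_lt hi).ne'
    rw [drawProb, eq_div_iff hden, sub_mul, div_mul_cancel₀ _ hden, one_mul,
      sub_eq_iff_eq_add, ← Nat.cast_add]
    congr 1
    omega
  rw [h_compl, div_mul_div_comm]
  push_cast
  ring

theorem drawWeight_mul_pathWeight {s i x : ℕ} (hs : s ≤ i) (hi : i < a + b) (hx : x ≤ 1) :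
    drawWeight a b s i x * pathWeight a b i s = pathWeight a b (i + 1) (s + x) := by
  interval_cases x
  · simpa [drawWeight] using one_sub_drawProb_mul_pathWeight a b hs hi
  · simpa [drawWeight] using drawProb_mul_pathWeight a b s i

theorem prod_range_drawWeight {y : ℕ → ℕ} (hy : ∀ i, y i ≤ 1) {n : ℕ} (hn : n ≤ a + b) :
    ∏ i ∈ range n, drawWeight a b (∑ j ∈ range i, y j) i (y i)
      = pathWeight a b n (∑ i ∈ range n, y i) := by
  induction n with
  | zero => simp [pathWeight]
  | succ n ih =>
    have h_prefix : ∑ j ∈ range n, y j ≤ n := by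
      simpa using sum_le_card_nsmul (range n) y 1 fun j _ => hy j
    rw [prod_range_succ, ih (by omega), mul_comm, sum_range_succ,
      drawWeight_mul_pathWeight a b h_prefix (by omega) (hy n)]

theorem choose_mul_pathWeight {n k : ℕ} (hk : k ≤ n) :
    n.choose k * pathWeight a b n k = a.choose k * b.choose (n - k) / (a + b).choose n := by
  have h_fact : (n.choose k * k ! * (n - k)! : ℝ) = n ! := by
    exact_mod_cast Nat.choose_mul_factorial_mul_factorial hk
  simp only [pathWeight, Nat.descFactorial_eq_factorial_mul_choose, Nat.cast_mul]
  calc _ = (n.choose k * k ! * (n - k)! : ℝ) * (a.choose k * b.choose (n - k))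
        / (n ! * (a + b).choose n) := by ring
    _ = _ := by rw [h_fact, mul_div_mul_left _ _ (by positivity)]

theorem prod_fin_drawWeight {N : ℕ} (hN : N ≤ a + b) (x : Fin N → ℕ) (hx : ∀ i, x i ≤ 1) :
    ∏ i : Fin N, drawWeight a b (∑ j : Fin N, if (j : ℕ) < i then x j else 0) i (x i)
      = pathWeight a b N (∑ i, x i) := by
  let y : ℕ → ℕ := fun i => if h : i < N then x ⟨i, h⟩ else 0
  have hy (i : ℕ) : y i ≤ 1 := by
    by_cases h : i < N <;> simp [y, h, hx]
  have hxy (i : Fin N) : x i = y i := by simp [y]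
  have h_prefix {n : ℕ} (hn : n ≤ N) :
      ∑ j : Fin N, (if (j : ℕ) < n then x j else 0) = ∑ j ∈ range n, y j := by
    simp only [hxy]
    rw [Fin.sum_univ_eq_sum_range (fun j => if j < n then y j else 0), ← sum_filter]
    congr 1
    ext j
    simp only [mem_filter, mem_range]
    omega
  have h_total : ∑ i, x i = ∑ i ∈ range N, y i := by
    simp only [hxy]
    exact Fin.sum_univ_eq_sum_range y N
  rw [h_total, ← prod_range_drawWeight a b hy hN, ← Fin.prod_univ_eq_prod_range]
  exact prod_congr rfl fun i _ => by rw [h_prefix i.isLt.le, hxy]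

theorem sum_range_mul_choose_mul_choose (N : ℕ) (g : ℕ → ℝ) (c : ℝ) :
    ∑ m ∈ range (N + 1), g m * (a.choose m * b.choose (N - m) / c)
      = ∑ m ∈ Icc (N - b) (min a N), g m * (a.choose m * b.choose (N - m) / c) := by
  refine (sum_subset (fun m hm => ?_) fun m hm hm_out => ?_).symm
  · simp only [mem_Icc, mem_range] at hm ⊢
    omega
  · simp only [mem_Icc, mem_range, not_and_or, not_le] at hm hm_out
    rcases hm_out with h | h
    · simp [Nat.choose_eq_zero_of_lt (show b < N - m by omega)]
    · simp [Nat.choose_eq_zero_of_lt (show a < m by omega)]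

end Hypergeometric

open Hypergeometric

theorem stmt_8_general (ν₁ ν₂ N : ℕ)
    (hsum : ν₁ + ν₂ ≥ N) (η : ℕ → ℝ)
    (S : (Fin N → Fin 2) → ℕ → ℕ)
    (hS : ∀ x n, S x n = ∑ i : Fin N, if (i : ℕ) < n then (x i : ℕ) else 0) :
    ∑ x : Fin N → Fin 2,
      (∏ i : Fin N,
        (max 0 ((ν₁ : ℝ) - S x i) / ((ν₁ : ℝ) + ν₂ - (i : ℕ))) ^ (x i : ℕ) *
        (1 - max 0 ((ν₁ : ℝ) - S x i) / ((ν₁ : ℝ) + ν₂ - (i : ℕ))) ^ (1 - (x i : ℕ)))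
      * η (S x N)
    = ∑ m ∈ Finset.Icc (N - ν₂) (min ν₁ N),
        η m * ((ν₁.choose m : ℝ) * (ν₂.choose (N - m) : ℝ) / ((ν₁ + ν₂).choose N : ℝ)) := by
  have h_weight (x : Fin N → Fin 2) :
      ∏ i : Fin N,
        (max 0 ((ν₁ : ℝ) - S x i) / ((ν₁ : ℝ) + ν₂ - (i : ℕ))) ^ (x i : ℕ) *
        (1 - max 0 ((ν₁ : ℝ) - S x i) / ((ν₁ : ℝ) + ν₂ - (i : ℕ))) ^ (1 - (x i : ℕ))
      = pathWeight ν₁ ν₂ N (∑ i, (x i : ℕ)) := by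
    rw [← prod_fin_drawWeight ν₁ ν₂ hsum (fun i => (x i : ℕ)) fun i => by omega]
    refine prod_congr rfl fun i _ => ?_
    rw [drawWeight, drawProb_eq ν₁ ν₂ (i.isLt.le.trans hsum), hS]
  have h_total (x : Fin N → Fin 2) : S x N = ∑ i, (x i : ℕ) := by
    rw [hS]
    exact sum_congr rfl fun i _ => if_pos i.isLt
  simp only [h_weight, h_total]
  rw [sum_fun_fin_two_apply_sum N fun m => pathWeight ν₁ ν₂ N m * η m,
    ← sum_range_mul_choose_mul_choose]
  refine sum_congr rfl fun m hm => ?_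
  rw [nsmul_eq_mul, ← mul_assoc, choose_mul_pathWeight ν₁ ν₂ (mem_range_succ_iff.mp hm), mul_comm]

theorem stmt_8 (ν₁ ν₂ N : ℕ) (hν₁ : 0 < ν₁) (hν₂ : 0 < ν₂) (hN : 0 < N)
    (hsum : ν₁ + ν₂ ≥ N) (η : ℕ → ℝ)
    (S : (Fin N → Fin 2) → ℕ → ℕ)
    (hS : ∀ x n, S x n = ∑ i : Fin N, if (i : ℕ) < n then (x i : ℕ) else 0) :
    ∑ x : Fin N → Fin 2,
      (∏ i : Fin N,
        (max 0 ((ν₁ : ℝ) - S x i) / ((ν₁ : ℝ) + ν₂ - (i : ℕ))) ^ (x i : ℕ) *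
        (1 - max 0 ((ν₁ : ℝ) - S x i) / ((ν₁ : ℝ) + ν₂ - (i : ℕ))) ^ (1 - (x i : ℕ)))
      * η (S x N)
    = ∑ m ∈ Finset.Icc (N - ν₂) (min ν₁ N),
        η m * ((ν₁.choose m : ℝ) * (ν₂.choose (N - m) : ℝ) / ((ν₁ + ν₂).choose N : ℝ)) :=
  stmt_8_general ν₁ ν₂ N hsum η S hS
end
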